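/- arXiv:1711.08237 — 5 statements merged into one kernel-verified Lean document; each statement's English description precedes it below -/
import Mathlib

section
/- Let α, β, p > 0, b ≥ 0, and m ≥ 0 be real numbers, and define a sequence by X_0 = m and X_{k+1} = X_k + max(α·X_k + β − p·b·(k+1), 0) for k ≥ 0. If b > (α/p)·(α·m + β)/(1 + α), then the sequence (X_k) is eventually constant; in particular it is bounded above. -/
/-- for the recursion `X 0 = m`,
`X (k+1) = X k + max (α·X k + β − p·b·(k+1)) 0`, if
`b > (α/p)·(α·m + β)/(1 + α)` then the sequence is eventually constant; in particular it
is bounded above. -/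
theorem firefighter_recursion_eventually_constant
    (α β p b m : ℝ) (hα : 0 < α) (hβ : 0 < β) (hp : 0 < p) (hb : 0 ≤ b) (hm : 0 ≤ m)
    (X : ℕ → ℝ) (hX0 : X 0 = m)
    (hrec : ∀ k : ℕ, X (k + 1) = X k + max (α * X k + β - p * b * (k + 1)) 0)
    (hbig : b > α / p * (α * m + β) / (1 + α)) :
    (∃ N : ℕ, ∀ k : ℕ, N ≤ k → X k = X N) ∧ ∃ C : ℝ, ∀ k : ℕ, X k ≤ C := by
  set c : ℝ := p * b with hc
  have hαm : 0 < α * m + β := by positivity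
  have hc0 : 0 < c := by
    have h1 : 0 < α / p * (α * m + β) / (1 + α) := by positivity
    have : 0 < b := lt_trans h1 hbig
    positivity
  have hδ : α * m + β - c - c / α < 0 := by
    have h3 : α / p * (α * m + β) < b * (1 + α) :=
      (div_lt_iff₀ (by positivity : (0:ℝ) < 1 + α)).mp hbig
    have h5 : p * (α / p * (α * m + β)) < p * (b * (1 + α)) :=
      mul_lt_mul_of_pos_left h3 hp
    have h6 : p * (α / p * (α * m + β)) = α * (α * m + β) := by field_simp
    have h2 : α * (α * m + β) < c * (1 + α) := by rw [hc]; linarith [h6 ▸ h5]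
    have ha : α * (c / α) = c := by field_simp
    nlinarith [h2, ha]
  clear_value c
  set δ : ℝ := α * m + β - c - c / α with hδdef
  clear_value δ
  obtain ⟨Y, hY⟩ : ∃ Y : ℕ → ℝ, ∀ k : ℕ, Y k = α * X k + β - c * (k + 1) :=
    ⟨_, fun _ => rfl⟩
  have ha : α * (c / α) = c := by field_simp
  have hY0 : Y 0 = c / α + δ := by
    rw [hY 0, hX0, hδdef]; push_cast; ring
  have key : ∀ n : ℕ, (∀ k ≤ n, 0 < Y k) → Y n ≤ c / α + (1 + α) ^ n * δ := by
    intro n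
    induction n with
    | zero => intro _; rw [hY0]; simp
    | succ n ih =>
      intro h
      have hYn : 0 < Y n := h n (Nat.le_succ n)
      have ihn : Y n ≤ c / α + (1 + α) ^ n * δ := ih fun k hk => h k (hk.trans (Nat.le_succ n))
      have hYn' : 0 ≤ α * X n + β - c * (n + 1) := by rw [hY n] at hYn; exact hYn.le
      have hmax : max (α * X n + β - c * (↑n + 1)) 0 = α * X n + β - c * (↑n + 1) :=
        max_eq_left hYn'
      have hstep : Y (n + 1) = (1 + α) * Y n - c := by
        rw [hY (n + 1), hY n, hrec n, hmax]
        push_cast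
        ring
      rw [hstep]
      have h2 : Y n - c / α ≤ (1 + α) ^ n * δ := by linarith
      have h3 : (1 + α) * (Y n - c / α) ≤ (1 + α) * ((1 + α) ^ n * δ) :=
        mul_le_mul_of_nonneg_left h2 (by positivity)
      have h4 : (1 + α) * ((1 + α) ^ n * δ) = (1 + α) ^ (n + 1) * δ := by ring
      linarith [h3, h4, ha]
  obtain ⟨n, hn⟩ := pow_unbounded_of_one_lt ((c / α) / (-δ)) (by linarith : (1:ℝ) < 1 + α)
  have hnδ : c / α + (1 + α) ^ n * δ < 0 := by
    have hδ' : 0 < -δ := by linarith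
    have := (div_lt_iff₀ hδ').mp hn
    linarith
  have hexj : ∃ j : ℕ, Y j ≤ 0 := by
    by_contra hcon
    push_neg at hcon
    have := key n (fun k _ => hcon k)
    linarith [hcon n]
  obtain ⟨N, hN⟩ := hexj
  have hconst : ∀ k : ℕ, Y (N + k) ≤ 0 ∧ X (N + k) = X N := by
    intro k
    induction k with
    | zero => exact ⟨hN, rfl⟩
    | succ k ih =>
      obtain ⟨hYk, hXk⟩ := ih
      have hYk' : α * X (N + k) + β - c * (↑(N + k) + 1) ≤ 0 := by
        rw [hY (N + k)] at hYk; exact hYk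
      have hmax : max (α * X (N + k) + β - c * (↑(N + k) + 1)) 0 = 0 := max_eq_right hYk'
      have hX' : X (N + k + 1) = X (N + k) := by
        rw [hrec (N + k), hmax, add_zero]
      have hNk : N + (k + 1) = N + k + 1 := rfl
      constructor
      · rw [hNk, hY (N + k + 1), hX']
        push_cast
        push_cast at hYk'
        linarith [hYk', hc0]
      · rw [hNk, hX', hXk]
  have hEC : ∀ k : ℕ, N ≤ k → X k = X N := by
    intro k hk
    obtain ⟨j, rfl⟩ := Nat.exists_eq_add_of_le hk
    exact (hconst j).2
  refine ⟨⟨N, hEC⟩, X N, ?_⟩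
  have hmono : Monotone X := by
    apply monotone_nat_of_le_succ
    intro k
    rw [hrec k]
    linarith [le_max_right (α * X k + β - c * (↑k + 1)) (0:ℝ)]
  intro k
  rcases le_or_gt k N with h | h
  · exact hmono h
  · exact le_of_eq (hEC k h.le)
end

section
/- Let γ, δ, p > 0, b ≥ 0, and m ≥ 0 be real numbers, and define a sequence by Y_0 = m and Y_{k+1} = Y_k + max(γ·Y_k + δ − p·b·(k+1), 0) for k ≥ 0. If b < (γ/p)·(γ·m + δ)/(1 + γ), then Y_k → ∞ as k → ∞; in particular the sequence is unbounded. -/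
/-- for the recursion `Y 0 = m`,
`Y (k+1) = Y k + max (γ·Y k + δ − p·b·(k+1)) 0`, if
`b < (γ/p)·(γ·m + δ)/(1 + γ)` then `Y k → ∞`; in particular the sequence is unbounded. -/
theorem firefighter_recursion_tendsto_atTop
    (γ δ p b m : ℝ) (hγ : 0 < γ) (hδ : 0 < δ) (hp : 0 < p) (hb : 0 ≤ b) (hm : 0 ≤ m)
    (Y : ℕ → ℝ) (hY0 : Y 0 = m)
    (hrec : ∀ k : ℕ, Y (k + 1) = Y k + max (γ * Y k + δ - p * b * (k + 1)) 0)
    (hsmall : b < γ / p * (γ * m + δ) / (1 + γ)) :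
    Filter.Tendsto Y Filter.atTop Filter.atTop ∧ ¬ BddAbove (Set.range Y) := by
  have h1γ : (0:ℝ) < 1 + γ := by linarith
  have h1 : p * b * (1 + γ) < γ * (γ * m + δ) := by
    have h := (lt_div_iff₀ h1γ).mp hsmall
    have h2 := mul_lt_mul_of_pos_left h hp
    calc p * b * (1 + γ) = p * (b * (1 + γ)) := by ring
      _ < p * (γ / p * (γ * m + δ)) := h2
      _ = γ * (γ * m + δ) := by field_simp
  set c : ℝ := γ * m + δ - p * b with hc_def
  have hgc : p * b < γ * c := by simp only [hc_def]; nlinarith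
  have hpb : 0 ≤ p * b := mul_nonneg hp.le hb
  have hc : 0 < c := by nlinarith
  have key : ∀ k : ℕ, c ≤ γ * Y k + δ - p * b * (k + 1) ∧ m + k * c ≤ Y k := by
    intro k
    induction k with
    | zero => simp [hY0, hc_def]
    | succ n ih =>
      obtain ⟨hA, hYn⟩ := ih
      have hAnn : (0:ℝ) ≤ γ * Y n + δ - p * b * (n + 1) := le_trans hc.le hA
      have hmax : max (γ * Y n + δ - p * b * (n + 1)) 0 =
          γ * Y n + δ - p * b * (n + 1) := max_eq_left hAnn
      have hYs : Y (n + 1) = Y n + (γ * Y n + δ - p * b * (n + 1)) := by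
        rw [hrec n, hmax]
      constructor
      · rw [hYs]
        push_cast
        nlinarith [mul_le_mul_of_nonneg_left hA hγ.le]
      · rw [hYs]
        push_cast
        nlinarith
  have htend : Filter.Tendsto Y Filter.atTop Filter.atTop := by
    apply Filter.tendsto_atTop_mono (fun k => (key k).2)
    apply Filter.tendsto_atTop_add_const_left
    exact (tendsto_natCast_atTop_atTop (R := ℝ)).atTop_mul_const hc
  refine ⟨htend, ?_⟩
  rintro ⟨M, hM⟩
  obtain ⟨k, hk⟩ := (htend.eventually_gt_atTop M).exists
  exact absurd (hM ⟨k, rfl⟩) (not_le.mpr hk)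
end

section
/- Let (Ω, F, P) be a probability space with a filtration (F_k)_{k∈ℕ}, and let (Z_k)_{k∈ℕ} be an adapted sequence of integrable nonnegative real random variables. Let K ∈ ℕ and let φ : ℝ × ℕ → ℝ be such that for each k < K the map z ↦ φ(z, k) is concave and monotone nondecreasing on [0, ∞). Suppose that for all k < K, E[Z_{k+1} | F_k] ≤ Z_k + φ(Z_k, k) almost surely. Define X(0) = E[Z_0] and X(k+1) = X(k) + φ(X(k), k). Then E[Z_t] ≤ X(t) for all t ≤ K. -/
/-!
With `g_k z = z + φ (z, k)`, the tower property and Jensen's inequality for the concave `g_k` give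
`E[Z (k+1)] = E[E[Z (k+1) | F k]] ≤ E[g_k (Z k)] ≤ g_k (E[Z k])`, and monotonicity of `g_k`
propagates `E[Z k] ≤ X k` one step further.
-/

open MeasureTheory Set

theorem ConvexOn.exists_affine_le_of_mem_interior {S : Set ℝ} {f : ℝ → ℝ} {a : ℝ}
    (hf : ConvexOn ℝ S f) (ha : a ∈ interior S) :
    ∃ m : ℝ, ∀ z ∈ S, f a + m * (z - a) ≤ f z := by
  refine ⟨derivWithin f (Ioi a) a, fun z hz => ?_⟩
  rcases lt_trichotomy z a with hza | rfl | haz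
  · have hslope := (hf.slope_le_leftDeriv_of_mem_interior hz ha hza).trans
      (hf.leftDeriv_le_rightDeriv_of_mem_interior ha)
    rw [slope_def_field, div_le_iff₀ (sub_pos.2 hza)] at hslope
    linarith
  · simp
  · have hslope := hf.rightDeriv_le_slope_of_mem_interior ha hz haz
    rw [slope_def_field, le_div_iff₀ (sub_pos.2 haz)] at hslope
    linarith

theorem ConcaveOn.exists_le_affine_of_mem_interior {S : Set ℝ} {f : ℝ → ℝ} {a : ℝ}
    (hf : ConcaveOn ℝ S f) (ha : a ∈ interior S) :
    ∃ m : ℝ, ∀ z ∈ S, f z ≤ f a + m * (z - a) := by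
  obtain ⟨m, hm⟩ := hf.neg.exists_affine_le_of_mem_interior ha
  refine ⟨-m, fun z hz => ?_⟩
  have hmz := hm z hz
  simp only [Pi.neg_apply] at hmz
  linarith

/-- A Jensen inequality that needs neither continuity of `g` nor integrability of `g ∘ Y`:
integrating a supporting line at `∫ Y` replaces both. -/
theorem ConcaveOn.integral_le_map_integral_of_ae_le {Ω : Type*} {m : MeasurableSpace Ω}
    {μ : Measure Ω} [IsProbabilityMeasure μ] {g : ℝ → ℝ} {Y W : Ω → ℝ}
    (hg : ConcaveOn ℝ (Ici 0) g) (hY : Integrable Y μ) (hY0 : 0 ≤ᵐ[μ] Y)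
    (hW : Integrable W μ) (hWY : ∀ᵐ ω ∂μ, W ω ≤ g (Y ω)) :
    ∫ ω, W ω ∂μ ≤ g (∫ ω, Y ω ∂μ) := by
  rcases (integral_nonneg_of_ae hY0).eq_or_lt with ha | ha
  · have hY_eq : Y =ᵐ[μ] 0 := (integral_eq_zero_iff_of_nonneg_ae hY0 hY).1 ha.symm
    have hW_le : ∀ᵐ ω ∂μ, W ω ≤ g (∫ ω, Y ω ∂μ) := by
      filter_upwards [hWY, hY_eq] with ω hω hYω
      simpa [hYω, ← ha] using hω
    simpa using integral_mono_ae hW (integrable_const _) hW_le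
  · set a := ∫ ω, Y ω ∂μ
    obtain ⟨s, hs⟩ := hg.exists_le_affine_of_mem_interior (by simpa using ha)
    have hW_le : ∀ᵐ ω ∂μ, W ω ≤ g a + s * (Y ω - a) := by
      filter_upwards [hWY, hY0] with ω hω hYω
      exact hω.trans (hs _ hYω)
    have hYa : Integrable (fun ω => Y ω - a) μ := hY.sub (integrable_const a)
    calc ∫ ω, W ω ∂μ ≤ ∫ ω, g a + s * (Y ω - a) ∂μ :=
          integral_mono_ae hW ((integrable_const _).add (hYa.const_mul s)) hW_le
      _ = g a := by
          rw [integral_add (integrable_const _) (hYa.const_mul s), integral_const_mul,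
            integral_sub hY (integrable_const a)]
          simp [a]

theorem le_of_le_recursion_of_monotoneOn {α : Type*} [Preorder α] {s : Set α}
    (hs : IsUpperSet s) {a X : ℕ → α} {g : ℕ → α → α} {K : ℕ} (ha : ∀ k, a k ∈ s)
    (hg : ∀ k < K, MonotoneOn (g k) s) (hstep : ∀ k < K, a (k + 1) ≤ g k (a k))
    (h0 : a 0 ≤ X 0) (hX : ∀ k < K, X (k + 1) = g k (X k)) :
    ∀ t ≤ K, a t ≤ X t := by
  intro t ht
  induction t with
  | zero => exact h0
  | succ t ih =>
    have htK : t < K := ht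
    have hat := ih htK.le
    calc a (t + 1) ≤ g t (a t) := hstep t htK
      _ ≤ g t (X t) := hg t htK (ha t) (hs hat (ha t)) hat
      _ = X (t + 1) := (hX t htK).symm

theorem expected_infection_upper_bound_general
    {Ω : Type*} {m0 : MeasurableSpace Ω} {P : Measure Ω} [IsProbabilityMeasure P]
    (F : Filtration ℕ m0) (Z : ℕ → Ω → ℝ)
    (hint : ∀ k, Integrable (Z k) P)
    (hpos : ∀ k ω, 0 ≤ Z k ω)
    (K : ℕ) (φ : ℝ × ℕ → ℝ)
    (hconc : ∀ k < K, ConcaveOn ℝ (Set.Ici (0 : ℝ)) (fun z => φ (z, k)))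
    (hmono : ∀ k < K, MonotoneOn (fun z => φ (z, k)) (Set.Ici (0 : ℝ)))
    (hcond : ∀ k < K, ∀ᵐ ω ∂P, (P[Z (k + 1)|F k]) ω ≤ Z k ω + φ (Z k ω, k))
    (X : ℕ → ℝ) (hX0 : X 0 = ∫ ω, Z 0 ω ∂P)
    (hXrec : ∀ k : ℕ, X (k + 1) = X k + φ (X k, k)) :
    ∀ t ≤ K, ∫ ω, Z t ω ∂P ≤ X t := by
  refine le_of_le_recursion_of_monotoneOn (isUpperSet_Ici 0) (g := fun k z => z + φ (z, k))
    (fun k => mem_Ici.2 (integral_nonneg (hpos k))) (fun k hk => monotoneOn_id.add (hmono k hk))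
    (fun k hk => ?_) hX0.ge (fun k _ => hXrec k)
  rw [← integral_condExp (F.le k)]
  exact ((concaveOn_id (convex_Ici 0)).add (hconc k hk)).integral_le_map_integral_of_ae_le
    (hint k) (ae_of_all _ (hpos k)) integrable_condExp (hcond k hk)

/-- upper bound on the expected infection cardinality.  If `(Z k)` is an
adapted, integrable, nonnegative process with
`E[Z (k+1) | F k] ≤ Z k + φ (Z k, k)` a.s. for all `k < K`, where `z ↦ φ (z, k)` is
concave and monotone nondecreasing on `[0, ∞)` for each `k < K`, and `X` is the
deterministic recursion `X 0 = E[Z 0]`, `X (k+1) = X k + φ (X k, k)`, then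
`E[Z t] ≤ X t` for all `t ≤ K`. -/
theorem expected_infection_upper_bound
    {Ω : Type*} {m0 : MeasurableSpace Ω} {P : Measure Ω} [IsProbabilityMeasure P]
    (F : Filtration ℕ m0) (Z : ℕ → Ω → ℝ)
    (hadapt : Adapted F Z) (hint : ∀ k, Integrable (Z k) P)
    (hpos : ∀ k ω, 0 ≤ Z k ω)
    (K : ℕ) (φ : ℝ × ℕ → ℝ)
    (hconc : ∀ k < K, ConcaveOn ℝ (Set.Ici (0 : ℝ)) (fun z => φ (z, k)))
    (hmono : ∀ k < K, MonotoneOn (fun z => φ (z, k)) (Set.Ici (0 : ℝ)))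
    (hcond : ∀ k < K, ∀ᵐ ω ∂P, (P[Z (k + 1)|F k]) ω ≤ Z k ω + φ (Z k ω, k))
    (X : ℕ → ℝ) (hX0 : X 0 = ∫ ω, Z 0 ω ∂P)
    (hXrec : ∀ k : ℕ, X (k + 1) = X k + φ (X k, k)) :
    ∀ t ≤ K, ∫ ω, Z t ω ∂P ≤ X t :=
  expected_infection_upper_bound_general F Z hint hpos K φ hconc hmono hcond X hX0 hXrec
end

section
/- Let d ≥ 1 and let A be a nonempty finite set of vertices of the d-dimensional grid graph that induces a connected subgraph. Then the number of edges with exactly one endpoint in A is at most 2(d−1)·|A| + 2. -/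
/-- The `d`-dimensional grid graph: vertices are functions `Fin d → ℤ`, with `x` adjacent
to `y` iff `Σ_i |x i − y i| = 1`. -/
def gridGraph (d : ℕ) : SimpleGraph (Fin d → ℤ) where
  Adj x y := ∑ i, |x i - y i| = 1
  symm := by
    constructor
    intro x y h
    simpa [abs_sub_comm] using h
  loopless := by
    constructor
    intro x h
    simp at h

/-! Summing degrees over `A` counts every edge leaving `A` once and every edge inside `A`
twice, and each vertex of `ℤ^d` has at most `2d` neighbours: `cut(A) + 2|E(A)| ≤ 2d|A|`.
A connected `A` spans at least `|A| - 1` edges, so `cut(A) ≤ 2d|A| - 2(|A| - 1)`. -/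

open Finset

namespace SimpleGraph

variable {V : Type*} (G : SimpleGraph V)

def edgeBoundary (A : Finset V) : Set (V × V) := {e | e.1 ∈ A ∧ e.2 ∉ A ∧ G.Adj e.1 e.2}

variable [DecidableEq V] [G.LocallyFinite] (A : Finset V)

lemma ncard_edgeBoundary :
    (G.edgeBoundary A).ncard = ∑ a ∈ A, #{b ∈ G.neighborFinset a | b ∉ A} := by
  have hunion : G.edgeBoundary A =
      ↑(A.biUnion fun a => {a} ×ˢ {b ∈ G.neighborFinset a | b ∉ A}) := by
    ext ⟨a, b⟩
    simp [edgeBoundary, and_comm, and_left_comm]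
  rw [hunion, Set.ncard_coe_finset, card_biUnion]
  · simp
  · exact fun a _ a' _ hne => disjoint_product.2 (.inl (disjoint_singleton.2 hne))

lemma degree_induce_eq_card_filter (a : (A : Set V)) [Fintype ((G.induce (A : Set V)).neighborSet a)] :
    (G.induce (A : Set V)).degree a = #{b ∈ G.neighborFinset a | b ∈ A} := by
  rw [← card_neighborFinset_eq_degree]
  refine card_bij (fun b _ => b) (by simp) (fun _ _ _ _ => Subtype.ext) ?_
  simp

lemma sum_degree_eq_ncard_edgeBoundary_add :
    ∑ a ∈ A, G.degree a =
      (G.edgeBoundary A).ncard + 2 * Nat.card (G.induce (A : Set V)).edgeSet := by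
  classical
  have hsplit (a : V) : G.degree a =
      #{b ∈ G.neighborFinset a | b ∉ A} + #{b ∈ G.neighborFinset a | b ∈ A} := by
    rw [add_comm, card_filter_add_card_filter_not, card_neighborFinset_eq_degree]
  have hinner : ∑ a ∈ A, #{b ∈ G.neighborFinset a | b ∈ A} =
      2 * Nat.card (G.induce (A : Set V)).edgeSet := by
    rw [Nat.card_eq_fintype_card, ← edgeFinset_card, ← sum_degrees_eq_twice_card_edges,
      ← sum_coe_sort A]
    exact sum_congr rfl fun a _ => (G.degree_induce_eq_card_filter A a).symm
  rw [sum_congr rfl fun a _ => hsplit a, sum_add_distrib, hinner, G.ncard_edgeBoundary]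

end SimpleGraph

lemma exists_eq_single_of_sum_abs_eq_one {ι : Type*} [Fintype ι] [DecidableEq ι] {z : ι → ℤ}
    (h : ∑ i, |z i| = 1) : ∃ i, |z i| = 1 ∧ z = Pi.single i (z i) := by
  obtain ⟨i, hi⟩ : ∃ i, z i ≠ 0 := by
    by_contra! hz
    simp [hz] at h
  have hle : ∀ j, |z j| ≤ 1 := fun j =>
    h ▸ single_le_sum (fun k _ => abs_nonneg (z k)) (mem_univ j)
  refine ⟨i, le_antisymm (hle i) (Int.one_le_abs hi), funext fun j => ?_⟩
  rcases eq_or_ne j i with rfl | hj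
  · simp
  rw [Pi.single_eq_of_ne hj]
  have hpair : |z i| + |z j| ≤ 1 := by
    rw [← h, ← sum_pair (f := fun k => |z k|) hj.symm]
    exact sum_le_sum_of_subset_of_nonneg (subset_univ _) fun k _ _ => abs_nonneg (z k)
  exact abs_nonpos_iff.mp (by linarith [Int.one_le_abs hi])

namespace gridGraph

variable {d : ℕ}

def neighbors (x : Fin d → ℤ) : Finset (Fin d → ℤ) :=
  (univ ×ˢ {1, -1}).image fun p : Fin d × ℤ => x + Pi.single p.1 p.2

lemma adj_iff_mem_neighbors {x y : Fin d → ℤ} :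
    (gridGraph d).Adj x y ↔ y ∈ neighbors x := by
  have hadj : (gridGraph d).Adj x y ↔ ∑ i, |(y - x) i| = 1 := by
    simp only [Pi.sub_apply, abs_sub_comm (y _)]; rfl
  simp only [hadj, neighbors, mem_image, mem_product, mem_univ, true_and, mem_insert,
    mem_singleton, Prod.exists]
  constructor
  · intro h
    obtain ⟨i, hi, hz⟩ := exists_eq_single_of_sum_abs_eq_one h
    exact ⟨i, (y - x) i, abs_eq zero_le_one |>.mp hi, by rw [← hz]; abel⟩
  · rintro ⟨i, s, hs, rfl⟩
    rw [add_sub_cancel_left,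
      sum_eq_single_of_mem i (mem_univ i) fun j _ hj => by simp [hj]]
    rcases hs with rfl | rfl <;> simp

instance (x : Fin d → ℤ) : Fintype ((gridGraph d).neighborSet x) :=
  Fintype.ofFinset (neighbors x) fun _ => adj_iff_mem_neighbors.symm

lemma neighborFinset_eq (x : Fin d → ℤ) : (gridGraph d).neighborFinset x = neighbors x := by
  ext y
  rw [SimpleGraph.mem_neighborFinset, adj_iff_mem_neighbors]

lemma degree_le (x : Fin d → ℤ) : (gridGraph d).degree x ≤ 2 * d := by
  rw [← SimpleGraph.card_neighborFinset_eq_degree, neighborFinset_eq]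
  calc #(neighbors x) ≤ #(univ ×ˢ ({1, -1} : Finset ℤ)) := card_image_le
    _ = 2 * d := by simp [mul_comm]

end gridGraph

theorem grid_cut_le_general (d : ℕ) (A : Finset (Fin d → ℤ))
    (hconn : (SimpleGraph.induce (↑A : Set (Fin d → ℤ)) (gridGraph d)).Connected) :
    {e : (Fin d → ℤ) × (Fin d → ℤ) |
        e.1 ∈ A ∧ e.2 ∉ A ∧ (gridGraph d).Adj e.1 e.2}.ncard ≤
      2 * (d - 1) * A.card + 2 := by
  have hdegrees := (gridGraph d).sum_degree_eq_ncard_edgeBoundary_add A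
  have hedges : #A ≤ Nat.card ((gridGraph d).induce (A : Set (Fin d → ℤ))).edgeSet + 1 := by
    simpa using hconn.card_vert_le_card_edgeSet_add_one
  have hdeg_le : ∑ a ∈ A, (gridGraph d).degree a ≤ #A * (2 * d) :=
    sum_le_card_nsmul _ _ _ fun a _ => gridGraph.degree_le a
  have hd : #A * (2 * d) ≤ 2 * (d - 1) * #A + 2 * #A := by
    rw [← add_mul, mul_comm]
    gcongr
    omega
  change (SimpleGraph.edgeBoundary _ A).ncard ≤ _
  omega

/-- for a nonempty finite connected set `A` of vertices of the
`d`-dimensional grid (`d ≥ 1`), the number of edges with exactly one endpoint in `A` is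
at most `2(d−1)·|A| + 2`. -/
theorem grid_cut_le (d : ℕ) (hd : 1 ≤ d) (A : Finset (Fin d → ℤ)) (hne : A.Nonempty)
    (hconn : (SimpleGraph.induce (↑A : Set (Fin d → ℤ)) (gridGraph d)).Connected) :
    {e : (Fin d → ℤ) × (Fin d → ℤ) |
        e.1 ∈ A ∧ e.2 ∉ A ∧ (gridGraph d).Adj e.1 e.2}.ncard ≤
      2 * (d - 1) * A.card + 2 :=
  grid_cut_le_general d A hconn
end

section
/- Let G be a finite tree (a finite connected acyclic simple graph) with a distinguished root r, and let s₀ = ({r}, ∅). Then for every infection probability p ∈ (0,1] and every budget b ∈ ℕ, the infimum of L^π(s₀) over first-order policies π equals the infimum of L^π(s₀) over all policies π. -/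
open scoped ENNReal

/-- A state of the stochastic Firefighter process: the pair of the (finite) set of
infected vertices and the (finite) set of vaccinated vertices. -/
abbrev FFState (V : Type*) := Finset V × Finset V

section FF

variable {V : Type*} [DecidableEq V] (G : SimpleGraph V) [DecidableRel G.Adj]
  [∀ v : V, Fintype (G.neighborSet v)]

/-- The neighborhood `N(I)` of a finite vertex set: the vertices outside `I` adjacent to
at least one vertex of `I`. -/
def ffNbhd (I : Finset V) : Finset V :=
  (I.biUnion fun u => G.neighborFinset u) \ I

/-- `cut(I,v)`: the number of edges between `I` and the vertex `v`. -/
def ffCut (I : Finset V) (v : V) : ℕ :=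
  (I.filter fun u => G.Adj u v).card

/-- The probability that a healthy vertex `v` gets infected by the infected set `I` in
one step: `1 − (1−p)^{cut(I,v)}`. -/
noncomputable def ffq (p : ℝ) (I : Finset V) (v : V) : ℝ≥0∞ :=
  ENNReal.ofReal (1 - (1 - p) ^ ffCut G I v)

/-- One-step transition probability of the stochastic Firefighter process under the
policy `π`: from state `s = (I,B)`, first the vertices `π s` are vaccinated, giving
`B' = B ∪ π s`; then, independently, each healthy vertex `v` becomes infected with
probability `1 − (1−p)^{cut(I,v)}`. -/
noncomputable def ffStep (p : ℝ) (π : FFState V → Finset V) (s s' : FFState V) : ℝ≥0∞ :=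
  if s'.2 = s.2 ∪ π s ∧ s.1 ⊆ s'.1 ∧ s'.1 \ s.1 ⊆ ffNbhd G s.1 \ (s.2 ∪ π s) then
    (∏ v ∈ s'.1 \ s.1, ffq G p s.1 v) *
      ∏ v ∈ (ffNbhd G s.1 \ (s.2 ∪ π s)) \ s'.1, (1 - ffq G p s.1 v)
  else 0

/-- The distribution of the state of the Markov chain at time `t`, started at `s₀`,
under the policy `π` (as a mass function). -/
noncomputable def ffDist (p : ℝ) (π : FFState V → Finset V) (s₀ : FFState V) :
    ℕ → FFState V → ℝ≥0∞
  | 0 => fun s => if s = s₀ then 1 else 0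
  | t + 1 => fun s' => ∑' s : FFState V, ffDist p π s₀ t s * ffStep G p π s s'

/-- The loss of a policy `π` from the initial state `s₀`:
`L^π(s₀) = sup_t E^π[|I_t|] ∈ [0,∞]`. -/
noncomputable def ffLoss (p : ℝ) (π : FFState V → Finset V) (s₀ : FFState V) : ℝ≥0∞ :=
  ⨆ t : ℕ, ∑' s : FFState V, ffDist G p π s₀ t s * (s.1.card : ℝ≥0∞)

/-- A policy with budget `b`: at each state `s = (I,B)` it vaccinates a set of at most
`b` vertices outside `I ∪ B`. -/
def IsPolicy (b : ℕ) (π : FFState V → Finset V) : Prop :=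
  ∀ s : FFState V, Disjoint (π s) (s.1 ∪ s.2) ∧ (π s).card ≤ b

/-- A first-order policy: it only vaccinates inside `N(I) ∖ B`. -/
def IsFirstOrder (π : FFState V → Finset V) : Prop :=
  ∀ s : FFState V, π s ⊆ ffNbhd G s.1 \ s.2

end FF

/-!
On a tree, when the fire `I` is connected and contains the root, every exposed vertex has exactly
one burning neighbour, so one step of the process infects the exposed vertices by independent
Bernoulli(`p`) trials. Order states by `s ≤ t` when `s` has fewer burning vertices and fewer
vertices the fire can still reach. A vaccination `A` at `t` is answered at `s` by vaccinating,
for each `a ∈ A`, the first vertex outside `I_s` on the path from the root to `a`: this first-order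
action blocks every walk that `A` blocks, and coupling the two steps on their common exposed
vertices keeps the successors ordered. Hence the `n`-step first-order dynamic-programming
values are monotone for this order and bound from below the expected fire after `n` steps of
any policy. Their supremum satisfies the Bellman inequality, so the greedy first-order policy
attains it.
-/

open Finset SimpleGraph

section BernoulliWeight

variable {α : Type*} [DecidableEq α]

theorem Finset.sum_powerset_union_of_disjoint {M : Type*} [AddCommMonoid M] {X Y : Finset α}
    (h : Disjoint X Y) (g : Finset α → M) :
    ∑ S ∈ (X ∪ Y).powerset, g S = ∑ U ∈ X.powerset, ∑ T ∈ Y.powerset, g (U ∪ T) := by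
  rw [powerset_union, ← image_sup_product, sum_image, sum_product]
  · rfl
  rintro ⟨U, T⟩ hUT ⟨U', T'⟩ hUT' heq
  simp only [coe_product, Set.mem_prod, mem_coe, mem_powerset] at hUT hUT'
  have hx : ∀ x, x ∈ U ∨ x ∈ T ↔ x ∈ U' ∨ x ∈ T' := fun x => by
    simpa using Finset.ext_iff.1 (heq : U ∪ T = U' ∪ T') x
  simp only [Prod.mk.injEq, Finset.ext_iff]
  grind [Finset.disjoint_left]

noncomputable def bernoulliWeight (q : α → ℝ≥0∞) (F S : Finset α) : ℝ≥0∞ :=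
  (∏ v ∈ S, q v) * ∏ v ∈ F \ S, (1 - q v)

variable {q : α → ℝ≥0∞}

theorem sum_bernoulliWeight {F : Finset α} (hq : ∀ v ∈ F, q v ≤ 1) :
    ∑ S ∈ F.powerset, bernoulliWeight q F S = 1 :=
  (prod_add q (fun v => 1 - q v) F).symm.trans
    (prod_eq_one fun v hv => add_tsub_cancel_of_le (hq v hv))

theorem bernoulliWeight_union {X Y U T : Finset α} (h : Disjoint X Y) (hU : U ⊆ X) (hT : T ⊆ Y) :
    bernoulliWeight q (X ∪ Y) (U ∪ T) = bernoulliWeight q X U * bernoulliWeight q Y T := by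
  have hsdiff : (X ∪ Y) \ (U ∪ T) = X \ U ∪ Y \ T := by
    ext x
    simp only [mem_sdiff, mem_union]
    grind [Finset.disjoint_left]
  rw [bernoulliWeight, bernoulliWeight, bernoulliWeight, prod_union (h.mono hU hT), hsdiff,
    prod_union (h.mono sdiff_subset sdiff_subset)]
  ring

theorem sum_bernoulliWeight_mul_of_union {X Y F : Finset α} (h : Disjoint X Y) (hF : X ∪ Y = F)
    (g : Finset α → ℝ≥0∞) :
    ∑ S ∈ F.powerset, bernoulliWeight q F S * g S =
      ∑ U ∈ X.powerset, bernoulliWeight q X U *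
        ∑ T ∈ Y.powerset, bernoulliWeight q Y T * g (U ∪ T) := by
  subst hF
  rw [sum_powerset_union_of_disjoint h]
  refine sum_congr rfl fun U hU => ?_
  rw [mul_sum]
  refine sum_congr rfl fun T hT => ?_
  rw [bernoulliWeight_union h (mem_powerset.1 hU) (mem_powerset.1 hT), mul_assoc]

theorem ENNReal.sum_mul_le_sum_mul_of_forall_le {ι κ : Type*} {s : Finset ι} {t : Finset κ}
    {w : ι → ℝ≥0∞} {w' : κ → ℝ≥0∞} (hw : ∑ i ∈ s, w i = 1) (hw' : ∑ j ∈ t, w' j = 1)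
    {a : ι → ℝ≥0∞} {c : κ → ℝ≥0∞} (h : ∀ i ∈ s, ∀ j ∈ t, a i ≤ c j) :
    ∑ i ∈ s, w i * a i ≤ ∑ j ∈ t, w' j * c j :=
  calc ∑ i ∈ s, w i * a i ≤ ∑ i ∈ s, w i * ⨅ j ∈ t, c j := by
        gcongr with i hi
        exact le_iInf₂ (h i hi)
    _ = ∑ j ∈ t, w' j * ⨅ j ∈ t, c j := by rw [← sum_mul, ← sum_mul, hw, hw']
    _ ≤ ∑ j ∈ t, w' j * c j := by
        gcongr with j hj
        exact iInf₂_le j hj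

/-- Couple the two samples: draw the common part `F₁ ∩ F₂` once and the two remainders
independently. -/
theorem sum_bernoulliWeight_mul_le {q₁ q₂ : α → ℝ≥0∞} {F₁ F₂ : Finset α}
    (hq₁ : ∀ v ∈ F₁, q₁ v ≤ 1) (hq₂ : ∀ v ∈ F₂, q₂ v ≤ 1) (hq : ∀ v ∈ F₁ ∩ F₂, q₁ v = q₂ v)
    {φ ψ : Finset α → ℝ≥0∞}
    (h : ∀ S₁ ⊆ F₁, ∀ S₂ ⊆ F₂, S₁ ∩ F₂ = S₂ ∩ F₁ → φ S₁ ≤ ψ S₂) :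
    ∑ S ∈ F₁.powerset, bernoulliWeight q₁ F₁ S * φ S ≤
      ∑ S ∈ F₂.powerset, bernoulliWeight q₂ F₂ S * ψ S := by
  have hK₁ : ∀ v ∈ F₁ \ F₂, q₁ v ≤ 1 := fun v hv => hq₁ v (mem_sdiff.1 hv).1
  have hK₂ : ∀ v ∈ F₂ \ F₁, q₂ v ≤ 1 := fun v hv => hq₂ v (mem_sdiff.1 hv).1
  rw [sum_bernoulliWeight_mul_of_union (F := F₁) (X := F₁ ∩ F₂) (Y := F₁ \ F₂)
      (disjoint_sdiff.mono_left inter_subset_right) (by rw [union_comm, sdiff_union_inter]),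
    sum_bernoulliWeight_mul_of_union (F := F₂) (X := F₁ ∩ F₂) (Y := F₂ \ F₁)
      (disjoint_sdiff.mono_left inter_subset_left)
      (by rw [union_comm, inter_comm F₁ F₂, sdiff_union_inter])]
  refine sum_le_sum fun U hU => ?_
  have hUK := mem_powerset.1 hU
  have hweight : bernoulliWeight q₁ (F₁ ∩ F₂) U = bernoulliWeight q₂ (F₁ ∩ F₂) U := by
    unfold bernoulliWeight
    congr 1
    · exact prod_congr rfl fun v hv => hq v (hUK hv)
    · exact prod_congr rfl fun v hv => by rw [hq v (sdiff_subset hv)]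
  rw [hweight]
  gcongr
  refine ENNReal.sum_mul_le_sum_mul_of_forall_le (sum_bernoulliWeight hK₁)
    (sum_bernoulliWeight hK₂) fun T hT T' hT' => h _ ?_ _ ?_ ?_
  · exact union_subset (hUK.trans inter_subset_left) ((mem_powerset.1 hT).trans sdiff_subset)
  · exact union_subset (hUK.trans inter_subset_right) ((mem_powerset.1 hT').trans sdiff_subset)
  · have := mem_powerset.1 hT
    have := mem_powerset.1 hT'
    ext x
    simp only [mem_inter, mem_union]
    grind

end BernoulliWeight

namespace Firefighter

section Step

variable {V : Type*} {G : SimpleGraph V} {p : ℝ}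

theorem ffq_le_one [DecidableRel G.Adj] (hp1 : p ≤ 1) {I : Finset V} {v : V} : ffq G p I v ≤ 1 :=
  ENNReal.ofReal_le_one.2 <| sub_le_self _ <| pow_nonneg (sub_nonneg.2 hp1) _

variable [DecidableEq V] [∀ v : V, Fintype (G.neighborSet v)]

theorem mem_ffNbhd {I : Finset V} {v : V} : v ∈ ffNbhd G I ↔ v ∉ I ∧ ∃ u ∈ I, G.Adj u v := by
  simp [ffNbhd, and_comm]

theorem disjoint_ffNbhd {I : Finset V} : Disjoint I (ffNbhd G I) := disjoint_sdiff

variable (G) in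
def exposed (s : FFState V) (A : Finset V) : Finset V := ffNbhd G s.1 \ (s.2 ∪ A)

variable [DecidableRel G.Adj]

variable (G p) in
noncomputable def ffMean (A : Finset V) (f : FFState V → ℝ≥0∞) (s : FFState V) : ℝ≥0∞ :=
  ∑' s', ffStep G p (fun _ => A) s s' * f s'

theorem ffMean_eq_sum (A : Finset V) (f : FFState V → ℝ≥0∞) (s : FFState V) :
    ffMean G p A f s = ∑ S ∈ (exposed G s A).powerset,
      bernoulliWeight (ffq G p s.1) (exposed G s A) S * f (s.1 ∪ S, s.2 ∪ A) := by
  unfold exposed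
  have hF : Disjoint s.1 (ffNbhd G s.1 \ (s.2 ∪ A)) := disjoint_ffNbhd.mono_right sdiff_subset
  have hinj : Set.InjOn (fun S => (s.1 ∪ S, s.2 ∪ A)) (ffNbhd G s.1 \ (s.2 ∪ A)).powerset :=
    fun S hS T hT h => by
      have h1 : s.1 ∪ S = s.1 ∪ T := congrArg Prod.fst h
      rw [← union_sdiff_cancel_left (hF.mono_right (mem_powerset.1 hS)), h1,
        union_sdiff_cancel_left (hF.mono_right (mem_powerset.1 hT))]
  rw [ffMean, tsum_eq_sum (s := (ffNbhd G s.1 \ (s.2 ∪ A)).powerset.image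
    fun S => (s.1 ∪ S, s.2 ∪ A)), sum_image hinj]
  · refine sum_congr rfl fun S hS => ?_
    have hSF := mem_powerset.1 hS
    have hS₁ : (s.1 ∪ S) \ s.1 = S := union_sdiff_cancel_left (hF.mono_right hSF)
    have hS₂ : (ffNbhd G s.1 \ (s.2 ∪ A)) \ (s.1 ∪ S) = (ffNbhd G s.1 \ (s.2 ∪ A)) \ S := by
      rw [sdiff_union_distrib, hF.symm.sdiff_eq_left, inter_eq_right.2 sdiff_subset]
    rw [ffStep, if_pos ⟨rfl, subset_union_left, hS₁.symm ▸ hSF⟩]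
    dsimp only
    rw [hS₁, hS₂, bernoulliWeight]
  · intro s' hs'
    rw [ffStep, ite_mul, zero_mul, ite_eq_right_iff]
    rintro ⟨h2, h1, h3⟩
    exact absurd (mem_image.2 ⟨s'.1 \ s.1, mem_powerset.2 h3,
      Prod.ext (union_sdiff_of_subset h1) h2.symm⟩) hs'

theorem ffMean_mono {A : Finset V} {f g : FFState V → ℝ≥0∞} {s : FFState V}
    (h : ∀ S ⊆ exposed G s A, f (s.1 ∪ S, s.2 ∪ A) ≤ g (s.1 ∪ S, s.2 ∪ A)) :
    ffMean G p A f s ≤ ffMean G p A g s := by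
  rw [ffMean_eq_sum, ffMean_eq_sum]
  gcongr with S hS
  exact h S (mem_powerset.1 hS)

theorem ffMean_const (hp1 : p ≤ 1) (A : Finset V) (c : ℝ≥0∞) (s : FFState V) :
    ffMean G p A (fun _ => c) s = c := by
  rw [ffMean_eq_sum, ← sum_mul, sum_bernoulliWeight fun _ _ => ffq_le_one hp1, one_mul]

theorem ffMean_iSup {ι : Type*} [Preorder ι] [IsDirectedOrder ι] {f : ι → FFState V → ℝ≥0∞}
    (hf : Monotone f) (A : Finset V) (s : FFState V) :
    ffMean G p A (⨆ i, f i) s = ⨆ i, ffMean G p A (f i) s := by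
  simp only [ffMean_eq_sum, iSup_apply, ENNReal.mul_iSup]
  exact ENNReal.finsetSum_iSup_of_monotone fun S _ _ h => mul_le_mul_right (hf h _) _

theorem tsum_ffDist_mul (π : FFState V → Finset V) (s₀ : FFState V) (t : ℕ)
    (f : FFState V → ℝ≥0∞) :
    ∑' s, ffDist G p π s₀ t s * f s = (fun g s => ffMean G p (π s) g s)^[t] f s₀ := by
  induction t generalizing f with
  | zero => simp [ffDist]
  | succ t ih =>
    simp only [ffDist, ← ENNReal.tsum_mul_right, mul_assoc]
    rw [ENNReal.tsum_comm]
    simp only [ENNReal.tsum_mul_left]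
    rw [Function.iterate_succ_apply, ← ih]
    rfl

theorem ffLoss_eq_iSup_iterate (π : FFState V → Finset V) (s₀ : FFState V) :
    ffLoss G p π s₀ = ⨆ t, (fun g s => ffMean G p (π s) g s)^[t] (fun s => (#s.1 : ℝ≥0∞)) s₀ :=
  iSup_congr fun t => tsum_ffDist_mul π s₀ t _

end Step

section Tree

variable {V : Type*} {G : SimpleGraph V} {r : V}

def IsConnectedFrom (G : SimpleGraph V) (r : V) (I : Finset V) : Prop :=
  r ∈ I ∧ ∀ u ∈ I, ∃ w : G.Walk r u, ∀ x ∈ w.support, x ∈ I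

theorem IsConnectedFrom.exists_walk {I : Finset V} (hI : IsConnectedFrom G r I) {u v : V}
    (hu : u ∈ I) (hv : v ∈ I) : ∃ w : G.Walk u v, ∀ x ∈ w.support, x ∈ I := by
  obtain ⟨wu, hwu⟩ := hI.2 u hu
  obtain ⟨wv, hwv⟩ := hI.2 v hv
  refine ⟨wu.reverse.append wv, fun x hx => ?_⟩
  rw [Walk.support_append, Walk.support_reverse, List.mem_append, List.mem_reverse] at hx
  exact hx.elim (hwu x) fun h => hwv x (List.mem_of_mem_tail h)

variable [DecidableEq V]

/-- Where the path from `r` to `a` leaves `I` (the junk value `a` unless `r ∈ I` and `a ∉ I`). -/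
noncomputable def entryVertex (hconn : G.Connected) (r : V) (I : Finset V) (a : V) : V :=
  if h : r ∈ I ∧ a ∉ I then
    ((hconn r a).some.toPath.1.exists_boundary_dart (↑I) h.1 h.2).choose.snd
  else a

variable [∀ v : V, Fintype (G.neighborSet v)]

theorem IsConnectedFrom.union {I S : Finset V} (hI : IsConnectedFrom G r I)
    (hS : S ⊆ ffNbhd G I) : IsConnectedFrom G r (I ∪ S) := by
  refine ⟨mem_union_left _ hI.1, fun u hu => ?_⟩
  rcases mem_union.1 hu with hu | hu
  · obtain ⟨w, hw⟩ := hI.2 u hu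
    exact ⟨w, fun x hx => mem_union_left _ (hw x hx)⟩
  · obtain ⟨-, d, hd, hdu⟩ := mem_ffNbhd.1 (hS hu)
    obtain ⟨w, hw⟩ := hI.2 d hd
    refine ⟨w.concat hdu, fun x hx => ?_⟩
    rw [Walk.support_concat, List.mem_append, List.mem_singleton] at hx
    exact hx.elim (fun h => mem_union_left _ (hw x h)) fun h => h ▸ mem_union_right _ hu

/-- An exposed vertex with two burning neighbours would close a cycle through the fire. -/
theorem ffCut_eq_one [DecidableRel G.Adj] (hacyclic : G.IsAcyclic) {I : Finset V}
    (hI : IsConnectedFrom G r I) {v : V} (hv : v ∈ ffNbhd G I) : ffCut G I v = 1 := by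
  obtain ⟨hvI, d, hd, hdv⟩ := mem_ffNbhd.1 hv
  refine card_eq_one.2 ⟨d, eq_singleton_iff_unique_mem.2 ⟨mem_filter.2 ⟨hd, hdv⟩, fun u hu => ?_⟩⟩
  obtain ⟨huI, huv⟩ := mem_filter.1 hu
  obtain ⟨w, hw⟩ := hI.exists_walk huI hd
  have hmem := isBridge_iff_forall_walk_mem_edges.1
    (isAcyclic_iff_forall_adj_isBridge.1 hacyclic hdv.symm) (Walk.cons huv.symm w)
  rw [Walk.edges_cons, List.mem_cons] at hmem
  exact hmem.elim (fun h => (Sym2.congr_right.1 h).symm)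
    fun h => absurd (hw v (w.fst_mem_support_of_mem_edges h)) hvI

theorem ffq_eq_ofReal [DecidableRel G.Adj] (hacyclic : G.IsAcyclic) {p : ℝ} {I : Finset V}
    (hI : IsConnectedFrom G r I) {v : V} (hv : v ∈ ffNbhd G I) :
    ffq G p I v = ENNReal.ofReal p := by
  rw [ffq, ffCut_eq_one hacyclic hI hv, pow_one, sub_sub_cancel]

variable (hconn : G.Connected)

theorem entryVertex_spec {I : Finset V} (hr : r ∈ I) {a : V} (ha : a ∉ I) :
    entryVertex hconn r I a ∈ ffNbhd G I ∧
      entryVertex hconn r I a ∈ (hconn r a).some.toPath.1.support := by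
  rw [entryVertex, dif_pos ⟨hr, ha⟩]
  obtain ⟨hmem, hfst, hsnd⟩ :=
    ((hconn r a).some.toPath.1.exists_boundary_dart (↑I) hr ha).choose_spec
  exact ⟨mem_ffNbhd.2 ⟨hsnd, _, hfst, Dart.adj _⟩, Walk.dart_snd_mem_support_of_mem_darts _ hmem⟩

theorem entryVertex_mem_support (hacyclic : G.IsAcyclic) {I : Finset V}
    (hI : IsConnectedFrom G r I) {a u : V} (ha : a ∉ I) (hu : u ∈ I) (q : G.Walk u a) :
    entryVertex hconn r I a ∈ q.support := by
  obtain ⟨w, hw⟩ := hI.2 u hu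
  have hpath : (w.append q).toPath = (hconn r a).some.toPath :=
    (hacyclic.subsingleton_path r a).elim _ _
  have hmem := Walk.support_toPath_subset_support (w.append q)
    (hpath ▸ (entryVertex_spec hconn hI.1 ha).2)
  rw [Walk.support_append, List.mem_append] at hmem
  exact hmem.elim (fun h => absurd (hw _ h) (mem_ffNbhd.1 (entryVertex_spec hconn hI.1 ha).1).1)
    List.mem_of_mem_tail

end Tree

section Reach

variable {V : Type*} {G : SimpleGraph V}

def reach (G : SimpleGraph V) (I C : Finset V) : Set V :=
  {w | ∃ u ∈ I, ∃ q : G.Walk u w, ∀ x ∈ q.support, x ∉ C}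

variable {I I' C : Finset V}

theorem notMem_of_mem_reach {w : V} (hw : w ∈ reach G I C) : w ∉ C := by
  obtain ⟨u, -, q, hq⟩ := hw
  exact hq w q.end_mem_support

theorem reach_mono_left (h : I ⊆ I') : reach G I C ⊆ reach G I' C :=
  fun _ ⟨u, hu, q, hq⟩ => ⟨u, h hu, q, hq⟩

variable [DecidableEq V]

theorem reach_union_subset {S : Finset V} (hS : ↑S ⊆ reach G I C) :
    reach G (I ∪ S) C ⊆ reach G I C := by
  rintro w ⟨u, hu, q, hq⟩
  rcases mem_union.1 hu with hu | hu
  · exact ⟨u, hu, q, hq⟩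
  · obtain ⟨u', hu', q', hq'⟩ := hS hu
    refine ⟨u', hu', q'.append q, fun x hx => ?_⟩
    rw [Walk.support_append, List.mem_append] at hx
    exact hx.elim (hq' x) fun h => hq x (List.mem_of_mem_tail h)

theorem mem_reach_of_mem_support {u w x : V} (hu : u ∈ I) (q : G.Walk u w)
    (hq : ∀ y ∈ q.support, y ∉ C) (hx : x ∈ q.support) : x ∈ reach G I C :=
  ⟨u, hu, q.takeUntil x hx, fun y hy => hq y (q.support_takeUntil_subset_support hx hy)⟩

theorem ffNbhd_sdiff_subset_reach [∀ v : V, Fintype (G.neighborSet v)] (h : Disjoint I C) :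
    ↑(ffNbhd G I \ C) ⊆ reach G I C := by
  intro w hw
  obtain ⟨hw, hwC⟩ := mem_sdiff.1 hw
  obtain ⟨-, d, hd, hdw⟩ := mem_ffNbhd.1 hw
  refine ⟨d, hd, Walk.cons hdw Walk.nil, fun x hx => ?_⟩
  simp only [Walk.support_cons, Walk.support_nil, List.mem_cons,
    List.not_mem_nil, or_false] at hx
  rcases hx with rfl | rfl
  exacts [disjoint_left.1 h hd, hwC]

end Reach

section Domination

variable {V : Type*} {G : SimpleGraph V} {r : V}

structure IsValidState (G : SimpleGraph V) (r : V) (s : FFState V) : Prop where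
  connected : IsConnectedFrom G r s.1
  disjoint : Disjoint s.1 s.2

theorem isValidState_initial : IsValidState G r ({r}, ∅) where
  connected := ⟨mem_singleton_self r, fun u hu => by
    obtain rfl := mem_singleton.1 hu
    exact ⟨Walk.nil, by simp⟩⟩
  disjoint := disjoint_empty_right _

structure StateLE (G : SimpleGraph V) (r : V) (s t : FFState V) : Prop where
  left : IsValidState G r s
  right : IsValidState G r t
  infected_subset : s.1 ⊆ t.1
  reach_subset : reach G s.1 s.2 ⊆ reach G t.1 t.2

theorem StateLE.refl {s : FFState V} (hs : IsValidState G r s) : StateLE G r s s :=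
  ⟨hs, hs, subset_rfl, subset_rfl⟩

variable [DecidableEq V] [∀ v : V, Fintype (G.neighborSet v)]

theorem IsValidState.succ {s : FFState V} (hs : IsValidState G r s) {A S : Finset V}
    (hA : Disjoint s.1 A) (hS : S ⊆ exposed G s A) : IsValidState G r (s.1 ∪ S, s.2 ∪ A) :=
  ⟨hs.connected.union (hS.trans sdiff_subset), disjoint_union_left.2
    ⟨disjoint_union_right.2 ⟨hs.disjoint, hA⟩, sdiff_disjoint.mono_left hS⟩⟩

theorem exposed_subset_union_of_reach_subset {s t : FFState V} (hst : StateLE G r s t)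
    {A₁ A₂ : Finset V} (hA₁ : Disjoint s.1 A₁)
    (hreach : reach G s.1 (s.2 ∪ A₁) ⊆ reach G t.1 (t.2 ∪ A₂)) :
    exposed G s A₁ ⊆ exposed G t A₂ ∪ t.1 := by
  intro w hw
  have hwR := hreach <|
    ffNbhd_sdiff_subset_reach (disjoint_union_right.2 ⟨hst.left.disjoint, hA₁⟩) hw
  by_cases hwt : w ∈ t.1
  · exact mem_union_right _ hwt
  · obtain ⟨-, d, hd, hdw⟩ := mem_ffNbhd.1 (mem_sdiff.1 hw).1
    exact mem_union_left _ <| mem_sdiff.2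
      ⟨mem_ffNbhd.2 ⟨hwt, d, hst.infected_subset hd, hdw⟩, notMem_of_mem_reach hwR⟩

theorem StateLE.succ {s t : FFState V} (hst : StateLE G r s t) {A₁ A₂ S₁ S₂ : Finset V}
    (hA₁ : Disjoint s.1 A₁) (hA₂ : Disjoint t.1 A₂)
    (hreach : reach G s.1 (s.2 ∪ A₁) ⊆ reach G t.1 (t.2 ∪ A₂))
    (hS₁ : S₁ ⊆ exposed G s A₁) (hS₂ : S₂ ⊆ exposed G t A₂) (hS : S₁ ⊆ t.1 ∪ S₂) :
    StateLE G r (s.1 ∪ S₁, s.2 ∪ A₁) (t.1 ∪ S₂, t.2 ∪ A₂) where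
  left := hst.left.succ hA₁ hS₁
  right := hst.right.succ hA₂ hS₂
  infected_subset := union_subset (hst.infected_subset.trans subset_union_left) hS
  reach_subset :=
    (reach_union_subset <| (coe_subset.2 hS₁).trans <|
      ffNbhd_sdiff_subset_reach (disjoint_union_right.2 ⟨hst.left.disjoint, hA₁⟩)).trans <|
    hreach.trans (reach_mono_left subset_union_left)

variable (hconn : G.Connected)

/-- Vaccinating the entry vertex of each `a ∈ A` blocks every walk from `s.1` to `a`. -/
noncomputable def foResponse (r : V) (s : FFState V) (A : Finset V) : Finset V :=
  A.image (entryVertex hconn r s.1) ∩ (ffNbhd G s.1 \ s.2)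

theorem foResponse_subset (s : FFState V) (A : Finset V) :
    foResponse hconn r s A ⊆ ffNbhd G s.1 \ s.2 :=
  inter_subset_right

theorem card_foResponse_le (s : FFState V) (A : Finset V) : #(foResponse hconn r s A) ≤ #A :=
  (card_le_card inter_subset_left).trans card_image_le

theorem reach_foResponse_subset (hacyclic : G.IsAcyclic) {s t : FFState V}
    (hst : StateLE G r s t) {A : Finset V} (hA : Disjoint t.1 A) :
    reach G s.1 (s.2 ∪ foResponse hconn r s A) ⊆ reach G t.1 (t.2 ∪ A) := by
  rintro w ⟨u, hu, q, hq⟩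
  refine ⟨u, hst.infected_subset hu, q, fun x hx => ?_⟩
  have hqs : ∀ y ∈ q.support, y ∉ s.2 := fun y hy h => hq y hy (mem_union_left _ h)
  have hxs := mem_reach_of_mem_support hu q hqs hx
  refine notMem_union.2 ⟨notMem_of_mem_reach (hst.reach_subset hxs), fun hxA => ?_⟩
  have hxI : x ∉ s.1 := fun h => disjoint_left.1 hA (hst.infected_subset h) hxA
  have hentry := q.support_takeUntil_subset_support hx <|
    entryVertex_mem_support hconn hacyclic hst.left.connected hxI hu (q.takeUntil x hx)
  exact hq _ hentry <| mem_union_right _ <| mem_inter.2 ⟨mem_image_of_mem _ hxA,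
    mem_sdiff.2 ⟨(entryVertex_spec hconn hst.left.connected.1 hxI).1, hqs _ hentry⟩⟩

end Domination

section Value

variable {V : Type*} [DecidableEq V] {G : SimpleGraph V} [∀ v : V, Fintype (G.neighborSet v)]
  {r : V} {p : ℝ} {b : ℕ}

variable (G b) in
def foActions (s : FFState V) : Finset (Finset V) :=
  (ffNbhd G s.1 \ s.2).powerset.filter (#· ≤ b)

theorem mem_foActions {s : FFState V} {A : Finset V} :
    A ∈ foActions G b s ↔ A ⊆ ffNbhd G s.1 \ s.2 ∧ #A ≤ b := by
  simp [foActions]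

theorem empty_mem_foActions (s : FFState V) : ∅ ∈ foActions G b s :=
  mem_foActions.2 ⟨empty_subset _, by simp⟩

variable [DecidableRel G.Adj]

theorem exists_mem_foActions_ffMean_le (hconn : G.Connected) (hacyclic : G.IsAcyclic)
    (hp1 : p ≤ 1) {f : FFState V → ℝ≥0∞} (hf : ∀ s t, StateLE G r s t → f s ≤ f t)
    {s t : FFState V} (hst : StateLE G r s t) {A : Finset V} (hA : Disjoint t.1 A)
    (hAb : #A ≤ b) : ∃ A' ∈ foActions G b s, ffMean G p A' f s ≤ ffMean G p A f t := by
  set A' := foResponse hconn r s A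
  have hA' : Disjoint s.1 A' :=
    disjoint_ffNbhd.mono_right ((foResponse_subset hconn s A).trans sdiff_subset)
  have hreach := reach_foResponse_subset hconn hacyclic hst hA
  have hexposed := exposed_subset_union_of_reach_subset hst hA' hreach
  refine ⟨A', mem_foActions.2 ⟨foResponse_subset hconn s A,
    (card_foResponse_le hconn s A).trans hAb⟩, ?_⟩
  rw [ffMean_eq_sum, ffMean_eq_sum]
  refine sum_bernoulliWeight_mul_le (fun _ _ => ffq_le_one hp1) (fun _ _ => ffq_le_one hp1)
    (fun v hv => ?_) fun S₁ hS₁ S₂ hS₂ hS =>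
      hf _ _ <| hst.succ hA' hA hreach hS₁ hS₂ fun x hx => ?_
  · rw [ffq_eq_ofReal hacyclic hst.left.connected (sdiff_subset (mem_inter.1 hv).1),
      ffq_eq_ofReal hacyclic hst.right.connected (sdiff_subset (mem_inter.1 hv).2)]
  · -- a vertex of `S₁` outside `exposed G t A` already burns in `t`
    by_cases hx₂ : x ∈ exposed G t A
    · exact mem_union_right _ (mem_inter.1 (hS ▸ mem_inter.2 ⟨hx, hx₂⟩)).1
    · exact (mem_union.1 (hexposed (hS₁ hx))).elim (absurd · hx₂) (mem_union_left _)

variable (G p b) in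
noncomputable def foValue : ℕ → FFState V → ℝ≥0∞
  | 0, s => #s.1
  | n + 1, s => (foActions G b s).inf fun A => ffMean G p A (foValue n) s

theorem monotone_foValue (hp1 : p ≤ 1) : Monotone (foValue G p b) := by
  refine monotone_nat_of_le_succ fun n s => ?_
  induction n generalizing s with
  | zero =>
    refine Finset.le_inf fun A _ => ?_
    calc foValue G p b 0 s = ffMean G p A (fun _ => (#s.1 : ℝ≥0∞)) s :=
          (ffMean_const hp1 A _ s).symm
      _ ≤ _ := ffMean_mono fun S _ => by simp only [foValue]; gcongr; exact subset_union_left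
  | succ n ih => exact inf_mono_fun fun A _ => ffMean_mono fun S _ => ih _

theorem foValue_mono_of_stateLE (hconn : G.Connected) (hacyclic : G.IsAcyclic) (hp1 : p ≤ 1)
    (n : ℕ) {s t : FFState V} (hst : StateLE G r s t) : foValue G p b n s ≤ foValue G p b n t := by
  induction n generalizing s t with
  | zero =>
    simp only [foValue]
    exact_mod_cast card_le_card hst.infected_subset
  | succ n ih =>
    refine Finset.le_inf fun A hA => ?_
    have hA' := mem_foActions.1 hA
    obtain ⟨A', hA'mem, hle⟩ := exists_mem_foActions_ffMean_le hconn hacyclic hp1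
      (fun _ _ => ih) hst (disjoint_ffNbhd.mono_right (hA'.1.trans sdiff_subset)) hA'.2
    exact (inf_le hA'mem).trans hle

theorem foValue_le_iterate (hconn : G.Connected) (hacyclic : G.IsAcyclic) (hp1 : p ≤ 1)
    {π : FFState V → Finset V} (hπ : IsPolicy b π) (n : ℕ) {s : FFState V}
    (hs : IsValidState G r s) :
    foValue G p b n s ≤ (fun g s => ffMean G p (π s) g s)^[n] (fun s => (#s.1 : ℝ≥0∞)) s := by
  induction n generalizing s with
  | zero => rfl
  | succ n ih =>
    have hπs : Disjoint s.1 (π s) := (hπ s).1.symm.mono_left subset_union_left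
    obtain ⟨A, hA, hle⟩ := exists_mem_foActions_ffMean_le hconn hacyclic hp1
      (fun _ _ => foValue_mono_of_stateLE hconn hacyclic hp1 n) (StateLE.refl hs) hπs (hπ s).2
    rw [Function.iterate_succ_apply']
    calc foValue G p b (n + 1) s ≤ ffMean G p A (foValue G p b n) s := inf_le hA
      _ ≤ ffMean G p (π s) (foValue G p b n) s := hle
      _ ≤ _ := ffMean_mono fun S hS => ih (hs.succ hπs hS)

variable (G p b) in
noncomputable def foValueLim : FFState V → ℝ≥0∞ := ⨆ n, foValue G p b n

theorem foValueLim_le_ffLoss (hconn : G.Connected) (hacyclic : G.IsAcyclic) (hp1 : p ≤ 1)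
    {π : FFState V → Finset V} (hπ : IsPolicy b π) :
    foValueLim G p b ({r}, ∅) ≤ ffLoss G p π ({r}, ∅) := by
  rw [foValueLim, iSup_apply, ffLoss_eq_iSup_iterate]
  exact iSup_mono fun n => foValue_le_iterate hconn hacyclic hp1 hπ n isValidState_initial

theorem inf_ffMean_foValueLim_le (hp1 : p ≤ 1) (s : FFState V) :
    (foActions G b s).inf (fun A => ffMean G p A (foValueLim G p b) s) ≤ foValueLim G p b s := by
  have hmono := monotone_foValue (G := G) (b := b) hp1
  have hexchange := (foActions G b s).finite_toSet.iSup_biInf_of_monotone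
    (f := fun A n => ffMean G p A (foValue G p b n) s)
    fun A _ _ _ h => ffMean_mono fun _ _ => hmono h _
  simp only [mem_coe] at hexchange
  calc (foActions G b s).inf (fun A => ffMean G p A (foValueLim G p b) s)
      = ⨅ A ∈ foActions G b s, ⨆ n, ffMean G p A (foValue G p b n) s := by
        simp only [Finset.inf_eq_iInf, foValueLim, ffMean_iSup hmono]
    _ = ⨆ n, foValue G p b (n + 1) s := by
        simp only [foValue, Finset.inf_eq_iInf]
        exact hexchange.symm
    _ ≤ foValueLim G p b s := by
        rw [foValueLim, iSup_apply]
        exact iSup_le fun n => le_iSup (fun n => foValue G p b n s) (n + 1)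

variable (G p b) in
noncomputable def greedyPolicy (s : FFState V) : Finset V :=
  (exists_mem_eq_inf (foActions G b s) ⟨∅, empty_mem_foActions s⟩
    fun A => ffMean G p A (foValueLim G p b) s).choose

theorem greedyPolicy_mem (s : FFState V) : greedyPolicy G p b s ∈ foActions G b s :=
  (exists_mem_eq_inf (foActions G b s) ⟨∅, empty_mem_foActions s⟩ _).choose_spec.1

theorem inf_ffMean_eq_greedyPolicy (s : FFState V) :
    (foActions G b s).inf (fun A => ffMean G p A (foValueLim G p b) s) =
      ffMean G p (greedyPolicy G p b s) (foValueLim G p b) s :=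
  (exists_mem_eq_inf (foActions G b s) ⟨∅, empty_mem_foActions s⟩ _).choose_spec.2

theorem isPolicy_greedyPolicy : IsPolicy b (greedyPolicy G p b) := fun s =>
  have h := mem_foActions.1 (greedyPolicy_mem (p := p) s)
  ⟨disjoint_union_right.2 ⟨(disjoint_ffNbhd.mono_right (h.1.trans sdiff_subset)).symm,
    disjoint_sdiff_self_left.mono_left h.1⟩, h.2⟩

theorem isFirstOrder_greedyPolicy : IsFirstOrder G (greedyPolicy G p b) := fun s =>
  (mem_foActions.1 (greedyPolicy_mem s)).1

theorem ffLoss_greedyPolicy_le (hp1 : p ≤ 1) (s₀ : FFState V) :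
    ffLoss G p (greedyPolicy G p b) s₀ ≤ foValueLim G p b s₀ := by
  suffices h : ∀ t s, (fun g s => ffMean G p (greedyPolicy G p b s) g s)^[t]
      (fun s => (#s.1 : ℝ≥0∞)) s ≤ foValueLim G p b s by
    rw [ffLoss_eq_iSup_iterate]
    exact iSup_le fun t => h t s₀
  intro t
  induction t with
  | zero => exact fun s => (le_iSup (fun n => foValue G p b n) 0) s
  | succ t ih =>
    intro s
    rw [Function.iterate_succ_apply']
    calc _ ≤ ffMean G p (greedyPolicy G p b s) (foValueLim G p b) s := ffMean_mono fun _ _ => ih _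
      _ = _ := (inf_ffMean_eq_greedyPolicy s).symm
      _ ≤ _ := inf_ffMean_foValueLim_le hp1 s

end Value

end Firefighter

open Firefighter

theorem firstOrder_optimal_on_trees_general {V : Type*} [Fintype V] [DecidableEq V]
    (G : SimpleGraph V) [DecidableRel G.Adj]
    (hconn : G.Connected) (hacyclic : G.IsAcyclic) (r : V)
    (p : ℝ) (hp1 : p ≤ 1) (b : ℕ) :
    (⨅ π ∈ {π : FFState V → Finset V | IsPolicy b π ∧ IsFirstOrder G π},
        ffLoss G p π ({r}, ∅)) =
      ⨅ π ∈ {π : FFState V → Finset V | IsPolicy b π}, ffLoss G p π ({r}, ∅) := by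
  refine le_antisymm (le_iInf₂ fun π hπ => ?_) (le_iInf₂ fun π hπ => iInf₂_le π hπ.1)
  calc _ ≤ ffLoss G p (greedyPolicy G p b) ({r}, ∅) :=
        iInf₂_le _ ⟨isPolicy_greedyPolicy, isFirstOrder_greedyPolicy⟩
    _ ≤ foValueLim G p b ({r}, ∅) := ffLoss_greedyPolicy_le hp1 _
    _ ≤ ffLoss G p π ({r}, ∅) := foValueLim_le_ffLoss hconn hacyclic hp1 hπ

/-- on a finite tree (a finite connected acyclic simple graph) with root
`r`, for every infection probability `p ∈ (0,1]` and every budget `b`, from the initial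
state `({r}, ∅)` the infimum of the loss over first-order policies equals the infimum
over all policies. -/
theorem firstOrder_optimal_on_trees {V : Type*} [Fintype V] [DecidableEq V]
    (G : SimpleGraph V) [DecidableRel G.Adj]
    (hconn : G.Connected) (hacyclic : G.IsAcyclic) (r : V)
    (p : ℝ) (hp0 : 0 < p) (hp1 : p ≤ 1) (b : ℕ) :
    (⨅ π ∈ {π : FFState V → Finset V | IsPolicy b π ∧ IsFirstOrder G π},
        ffLoss G p π ({r}, ∅)) =
      ⨅ π ∈ {π : FFState V → Finset V | IsPolicy b π}, ffLoss G p π ({r}, ∅) :=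
  firstOrder_optimal_on_trees_general G hconn hacyclic r p hp1 b
end
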